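/- arXiv:1303.6802 — 4 statements merged into one kernel-verified Lean document; each statement's English description precedes it below -/
import Mathlib

section
/- There are no fully-transitive 3-orbit maniplexes: if M is a maniplex whose automorphism group has exactly 3 orbits on flags, then there exists some rank i such that Aut(M) is not transitive on the i-faces of M. Equivalently, every connected properly n-edge-coloured symmetry type graph on 3 vertices satisfying the 4-cycle quotient condition has some colour i whose removal disconnects the graph. -/
/-- A maniplex of rank `n-1`, given by its flag graph: a connected, properly
`n`-edge-coloured graph on the flag set `F`, encoded by fixed-point-free
involutions `r c` (one for each colour), with the commuting 4-cycle condition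
for colours differing by at least 2. -/
structure Maniplex (n : ℕ) (F : Type) where
  r : Fin n → Equiv.Perm F
  invol : ∀ c, r c * r c = 1
  fixfree : ∀ c v, r c v ≠ v
  comm : ∀ i j : Fin n, (i : ℕ) + 2 ≤ (j : ℕ) → r i * r j = r j * r i
  alt4 : ∀ i j : Fin n, (i : ℕ) + 2 ≤ (j : ℕ) → ∀ v, r i v ≠ r j v
  conn : ∀ u v : F, ∃ g ∈ Subgroup.closure (Set.range r), g u = v

/-- The automorphism group of a maniplex: colour-preserving automorphisms of
the flag graph, i.e. permutations commuting with every connection generator. -/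
def Maniplex.Aut {n : ℕ} {F : Type} (M : Maniplex n F) : Subgroup (Equiv.Perm F) :=
  Subgroup.centralizer (Set.range M.r)

/-- A symmetry type graph: a connected pregraph (semi-edges allowed, encoded as
fixed points), properly edge-coloured with `n` colours, so that each vertex is
incident to exactly one edge or semi-edge of each colour, and satisfying the
4-cycle quotient condition: if a vertex has non-semi-edges of colours `i, j`
with `|i - j| ≥ 2`, then the `(i,j)`-component containing it has 4 vertices. -/
structure SymGraph (n : ℕ) (V : Type) where
  m : Fin n → Equiv.Perm V
  invol : ∀ c, m c * m c = 1
  conn : ∀ u v : V, ∃ g ∈ Subgroup.closure (Set.range m), g u = v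
  quot4 : ∀ i j : Fin n, (i : ℕ) + 2 ≤ (j : ℕ) → ∀ v : V, m i v ≠ v → m j v ≠ v →
    (MulAction.orbit (Subgroup.closure ({m i, m j} : Set (Equiv.Perm V))) v).ncard = 4

/-- `T^i` is connected: any two vertices are joined by a walk avoiding colour `i`. -/
def SymGraph.delConn {n : ℕ} {V : Type} (G : SymGraph n V) (i : Fin n) : Prop :=
  ∀ u v : V, ∃ g ∈ Subgroup.closure (G.m '' {c : Fin n | c ≠ i}), g u = v

/-- `M` is `i`-face-transitive. -/
def Maniplex.faceTransitive {n : ℕ} {F : Type} (M : Maniplex n F) (i : Fin n) : Prop :=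
  ∀ Φ Ψ : F, ∃ g ∈ M.Aut,
    (g : Equiv.Perm F) ''
        MulAction.orbit (Subgroup.closure (M.r '' {c : Fin n | c ≠ i})) Φ =
      MulAction.orbit (Subgroup.closure (M.r '' {c : Fin n | c ≠ i})) Ψ

/-!
The flag orbits of `Aut M` form the symmetry type graph of `M`: each connection `r c` commutes
with `Aut M`, hence permutes the orbits. Both halves of the theorem therefore concern a family `m`
of involutions of a 3-element set, indexed by the colours, such that two colours at distance at
least 2 act in the same way as soon as both act nontrivially: for the orbits of a maniplex because
commuting nontrivial involutions of 3 points coincide, and for a symmetry type graph because the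
4-cycle condition rules out two such colours altogether (their moved points overlap).
If `c₀` is the least colour acting nontrivially, every nontrivial colour other than `c₀ + 1` acts
as `m c₀`. Deleting colour `c₀ + 1` (or `c₀` if it is the last one) leaves a group of order at
most 2, which is not transitive on 3 points.
-/

open Equiv Subgroup MulAction

theorem Fin.exists_forall_ne_eq_or_eq {β : Type*} {n : ℕ} [NeZero n] (m : Fin n → β) (b : β)
    (hfar : ∀ i j : Fin n, (i : ℕ) + 2 ≤ j → m i ≠ b → m j ≠ b → m i = m j) :
    ∃ i j : Fin n, ∀ c, c ≠ i → m c = b ∨ m c = m j := by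
  by_cases h : ∃ c, m c ≠ b
  · obtain ⟨c₀, hc₀, hmin⟩ := wellFounded_lt.has_min {c : Fin n | m c ≠ b} h
    refine ⟨⟨min (c₀ + 1) (n - 1), by omega⟩, c₀, fun c hci => ?_⟩
    by_contra! hc
    have hnlt : ¬ c < c₀ := hmin c hc.1
    have hne : c ≠ c₀ := fun h => hc.2 (congrArg m h)
    refine hc.2 (hfar c₀ c ?_ hc₀ hc.1).symm
    rw [Fin.ne_iff_vne] at hci hne
    rw [Fin.lt_def] at hnlt
    dsimp only at hci
    omega
  · exact ⟨0, 0, fun c _ => Or.inl (not_not.mp fun hc => h ⟨c, hc⟩)⟩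

namespace Equiv.Perm

variable {V : Type*}

theorem card_le_two_of_forall_exists_mem_closure {S : Set (Perm V)} {t : Perm V}
    (ht : t * t = 1) (hS : S ⊆ {1, t}) (htr : ∀ u v : V, ∃ g ∈ closure S, g u = v) :
    Nat.card V ≤ 2 := by
  rcases isEmpty_or_nonempty V with hV | ⟨⟨u⟩⟩
  · simp
  have ht2 : t ^ 2 = 1 := by rw [sq, ht]
  have : Finite (zpowers t) :=
    (isOfFinOrder_iff_pow_eq_one.mpr ⟨2, two_pos, ht2⟩).finite_zpowers.to_subtype
  have hle : closure S ≤ zpowers t := by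
    rw [closure_le]
    intro s hs
    rcases hS hs with rfl | rfl
    exacts [one_mem _, mem_zpowers _]
  calc Nat.card V ≤ Nat.card (zpowers t) :=
        Nat.card_le_card_of_surjective (fun g : zpowers t => (g : Perm V) u) fun v => by
          obtain ⟨g, hg, rfl⟩ := htr u v
          exact ⟨⟨g, hle hg⟩, rfl⟩
    _ = orderOf t := Nat.card_zpowers t
    _ ≤ 2 := orderOf_le_of_pow_eq_one two_pos ht2

theorem exists_apply_ne_and_apply_ne_of_card_le_three [Finite V] (hV : Nat.card V ≤ 3)
    {f g : Perm V} (hf : f ≠ 1) (hg : g ≠ 1) : ∃ v, f v ≠ v ∧ g v ≠ v := by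
  classical
  have := Fintype.ofFinite V
  have hunion := (f.support ∪ g.support).card_le_univ
  rw [Fintype.card_eq_nat_card] at hunion
  have hinter := Finset.card_union_add_card_inter f.support g.support
  have hf2 := two_le_card_support_of_ne_one hf
  have hg2 := two_le_card_support_of_ne_one hg
  obtain ⟨v, hv⟩ : (f.support ∩ g.support).Nonempty := by
    rw [← Finset.card_pos]; omega
  simp only [Finset.mem_inter, mem_support] at hv
  exact ⟨v, hv⟩

theorem eq_of_commute_of_card_eq_three (hV : Nat.card V = 3) {f g : Perm V}
    (hf : f * f = 1) (hg : g * g = 1) (hfg : Commute f g) (hf1 : f ≠ 1) (hg1 : g ≠ 1) :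
    f = g := by
  have : Finite V := Nat.finite_of_card_ne_zero (by omega)
  let e := (Finite.equivFinOfCardEq hV).permCongrHom
  have key : ∀ f g : Perm (Fin 3), f * f = 1 → g * g = 1 → f * g = g * f → f ≠ 1 → g ≠ 1 →
      f = g := by
    decide
  refine e.injective (key _ _ ?_ ?_ (hfg.map e).eq ?_ ?_)
  · rw [← map_mul, hf, map_one]
  · rw [← map_mul, hg, map_one]
  · rwa [ne_eq, map_eq_one_iff _ e.injective]
  · rwa [ne_eq, map_eq_one_iff _ e.injective]

theorem exists_mem_closure_forall_apply_eq {α β ι : Type*} (p : α → β)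
    (r : ι → Perm α) (s : ι → Perm β) (hrs : ∀ c a, s c (p a) = p (r c a)) (C : Set ι)
    {h : Perm α} (hh : h ∈ closure (r '' C)) :
    ∃ h' ∈ closure (s '' C), ∀ a, h' (p a) = p (h a) := by
  induction hh using closure_induction with
  | mem x hx =>
    obtain ⟨c, hc, rfl⟩ := hx
    exact ⟨s c, subset_closure ⟨c, hc, rfl⟩, hrs c⟩
  | one => exact ⟨1, one_mem _, fun a => rfl⟩
  | mul x y _ _ ihx ihy =>
    obtain ⟨x', hx', hx⟩ := ihx
    obtain ⟨y', hy', hy⟩ := ihy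
    exact ⟨x' * y', mul_mem hx' hy', fun a => by simp only [Perm.mul_apply, hy, hx]⟩
  | inv x _ ih =>
    obtain ⟨x', hx', hx⟩ := ih
    refine ⟨x'⁻¹, inv_mem hx', fun a => ?_⟩
    rw [Perm.inv_eq_iff_eq, hx, ← Perm.mul_apply, mul_inv_cancel, Perm.one_apply]

theorem forall_exists_mem_closure_of_semiconj {α β ι : Type*} {p : α → β}
    (hp : Function.Surjective p) (r : ι → Perm α) (s : ι → Perm β)
    (hrs : ∀ c a, s c (p a) = p (r c a)) (C : Set ι)
    (htr : ∀ a b, ∃ h ∈ closure (r '' C), p (h a) = p b) :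
    ∀ u v : β, ∃ h' ∈ closure (s '' C), h' u = v := by
  intro u v
  obtain ⟨a, rfl⟩ := hp u
  obtain ⟨b, rfl⟩ := hp v
  obtain ⟨h, hh, hab⟩ := htr a b
  obtain ⟨h', hh', hh'p⟩ := exists_mem_closure_forall_apply_eq p r s hrs C hh
  exact ⟨h', hh', (hh'p a).trans hab⟩

section OrbitQuotient

variable {α : Type*} (H : Subgroup (Perm α))

theorem orbitRel_iff_of_mem_centralizer {p : Perm α}
    (hp : p ∈ centralizer (H : Set (Perm α))) (a b : α) :
    orbitRel H α a b ↔ orbitRel H α (p a) (p b) := by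
  simp only [orbitRel_apply, mem_orbit_iff]
  refine exists_congr fun h => ?_
  have hcomm : h • p b = p (h • b) := Perm.ext_iff.mp (mem_centralizer_iff.mp hp h h.2) b
  rw [hcomm, p.injective.eq_iff]

def orbitRelQuotientHom : centralizer (H : Set (Perm α)) →* Perm (orbitRel.Quotient H α) where
  toFun p := Quotient.congr p (orbitRel_iff_of_mem_centralizer H p.2)
  map_one' := Equiv.ext fun x => Quotient.inductionOn x fun _ => rfl
  map_mul' _ _ := Equiv.ext fun x => Quotient.inductionOn x fun _ => rfl

end OrbitQuotient

theorem exists_not_forall_exists_mem_closure_image_ne {n : ℕ}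
    (hV : 2 < Nat.card V) (m : Fin n → Perm V) (hinv : ∀ c, m c * m c = 1)
    (hfar : ∀ i j : Fin n, (i : ℕ) + 2 ≤ j → m i ≠ 1 → m j ≠ 1 → m i = m j)
    (hconn : ∀ u v : V, ∃ g ∈ closure (Set.range m), g u = v) :
    ∃ i : Fin n, ¬ ∀ u v : V, ∃ g ∈ closure (m '' {c | c ≠ i}), g u = v := by
  rcases n.eq_zero_or_pos with rfl | hn
  · have := card_le_two_of_forall_exists_mem_closure (one_mul 1)
      (by simp [Set.range_eq_empty]) hconn
    omega
  · have : NeZero n := ⟨hn.ne'⟩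
    obtain ⟨i, j, hij⟩ := Fin.exists_forall_ne_eq_or_eq m 1 hfar
    refine ⟨i, fun htr => ?_⟩
    have := card_le_two_of_forall_exists_mem_closure (hinv j)
      (by rintro _ ⟨c, hc, rfl⟩; exact hij c hc) htr
    omega

end Equiv.Perm

theorem MulAction.ncard_setOf_eq_orbit (G α : Type*) [Group G] [MulAction G α] :
    {O : Set α | ∃ a, O = orbit G a}.ncard = Nat.card (orbitRel.Quotient G α) := by
  rw [← Set.ncard_range_of_injective orbitRel.Quotient.orbit_injective]
  congr 1
  ext O
  exact ⟨fun ⟨a, ha⟩ => ⟨Quotient.mk'' a, ha.symm⟩,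
    fun ⟨x, hx⟩ => Quotient.inductionOn' x (fun a hx => ⟨a, hx.symm⟩) hx⟩

namespace Maniplex

variable {n : ℕ} {F : Type} (M : Maniplex n F)

theorem r_mem_centralizer_aut (c : Fin n) : M.r c ∈ centralizer (M.Aut : Set (Perm F)) :=
  mem_centralizer_iff.mpr fun _ hg => (mem_centralizer_iff.mp hg (M.r c) ⟨c, rfl⟩).symm

def symTypeR (c : Fin n) : Perm (orbitRel.Quotient M.Aut F) :=
  Perm.orbitRelQuotientHom M.Aut ⟨M.r c, M.r_mem_centralizer_aut c⟩

theorem symTypeR_mk (c : Fin n) (a : F) :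
    M.symTypeR c (Quotient.mk'' a) = Quotient.mk'' (M.r c a) :=
  rfl

theorem symTypeR_mul_self (c : Fin n) : M.symTypeR c * M.symTypeR c = 1 := by
  rw [symTypeR, ← map_mul, ← map_one (Perm.orbitRelQuotientHom M.Aut)]
  exact congrArg _ (Subtype.ext (M.invol c))

theorem symTypeR_commute {i j : Fin n} (hij : (i : ℕ) + 2 ≤ j) :
    Commute (M.symTypeR i) (M.symTypeR j) :=
  Commute.map (Subtype.ext (M.comm i j hij)) _

theorem forall_exists_mem_closure_range_symTypeR (u v : orbitRel.Quotient M.Aut F) :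
    ∃ g ∈ closure (Set.range M.symTypeR), g u = v := by
  rw [← Set.image_univ]
  refine Perm.forall_exists_mem_closure_of_semiconj Quotient.mk''_surjective M.r M.symTypeR
    M.symTypeR_mk Set.univ (fun a b => ?_) u v
  obtain ⟨g, hg, rfl⟩ := M.conn a b
  exact ⟨g, by rwa [Set.image_univ], rfl⟩

theorem forall_exists_mem_closure_symTypeR_of_faceTransitive {i : Fin n}
    (hi : M.faceTransitive i) (u v : orbitRel.Quotient M.Aut F) :
    ∃ g ∈ closure (M.symTypeR '' {c | c ≠ i}), g u = v := by
  refine Perm.forall_exists_mem_closure_of_semiconj Quotient.mk''_surjective M.r M.symTypeR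
    M.symTypeR_mk _ (fun a b => ?_) u v
  obtain ⟨g, hg, himg⟩ := hi b a
  obtain ⟨⟨h, hh⟩, hha⟩ : g b ∈ orbit (closure (M.r '' {c | c ≠ i})) a :=
    himg ▸ Set.mem_image_of_mem g (mem_orbit_self b)
  refine ⟨h, hh, ?_⟩
  rw [show h a = g b from hha]
  exact Quotient.sound' ⟨⟨g, hg⟩, rfl⟩

end Maniplex

theorem SymGraph.eq_one_or_eq_one_of_card_le_three {n : ℕ} {V : Type} [Finite V]
    (hV : Nat.card V ≤ 3) (G : SymGraph n V) {i j : Fin n} (hij : (i : ℕ) + 2 ≤ j) :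
    G.m i = 1 ∨ G.m j = 1 := by
  by_contra! h
  obtain ⟨v, hvi, hvj⟩ := Perm.exists_apply_ne_and_apply_ne_of_card_le_three hV h.1 h.2
  have h4 := G.quot4 i j hij v hvi hvj
  have := Set.ncard_le_card (orbit (closure ({G.m i, G.m j} : Set (Perm V))) v)
  omega

/-- There are no fully-transitive 3-orbit maniplexes: if `Aut M` has exactly 3
orbits on flags then `M` fails to be `i`-face-transitive for some rank `i`;
equivalently, every symmetry type graph on 3 vertices has a colour whose
removal disconnects it. -/
theorem stmt3 (n : ℕ) :
    (∀ (F : Type) (M : Maniplex n F),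
      {O : Set F | ∃ Φ : F, O = MulAction.orbit M.Aut Φ}.ncard = 3 →
        ∃ i : Fin n, ¬ M.faceTransitive i) ∧
    (∀ (V : Type) [Fintype V], Fintype.card V = 3 →
      ∀ G : SymGraph n V, ∃ i : Fin n, ¬ G.delConn i) := by
  refine ⟨fun F M hM => ?_, fun V _ hV G => ?_⟩
  · rw [ncard_setOf_eq_orbit] at hM
    obtain ⟨i, hi⟩ := Perm.exists_not_forall_exists_mem_closure_image_ne (by omega)
      M.symTypeR M.symTypeR_mul_self
      (fun c d hcd hc hd => Perm.eq_of_commute_of_card_eq_three hM (M.symTypeR_mul_self c)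
        (M.symTypeR_mul_self d) (M.symTypeR_commute hcd) hc hd)
      M.forall_exists_mem_closure_range_symTypeR
    exact ⟨i, fun hft => hi (M.forall_exists_mem_closure_symTypeR_of_faceTransitive hft)⟩
  · rw [← Nat.card_eq_fintype_card] at hV
    exact Perm.exists_not_forall_exists_mem_closure_image_ne (by omega) G.m G.invol
      (fun _ _ hcd hc hd => ((G.eq_one_or_eq_one_of_card_le_three hV.le hcd).elim hc hd).elim)
      G.conn
end

section
/- Let M be a maniplex with symmetry type graph T. Then M is i-face-transitive (Aut(M) acts transitively on the i-faces of M) if and only if the subgraph T^i of T obtained by deleting all edges and semi-edges of colour i is connected. -/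
/-- `T^i` is connected: any two vertices of the symmetry type graph (flag
orbits) are joined by a walk avoiding colour `i`. -/
def Maniplex.delConn {n : ℕ} {F : Type} (M : Maniplex n F) (i : Fin n) : Prop :=
  ∀ Φ Ψ : F, ∃ h ∈ Subgroup.closure (M.r '' {c : Fin n | c ≠ i}),
    (h : Equiv.Perm F) Φ ∈ MulAction.orbit M.Aut Ψ

/-!
Automorphisms commute with the connection generators, so an automorphism `g` maps the `i`-face
of `Φ` onto the `i`-face of `g Φ`. Hence some automorphism sends the `i`-face of `Φ` to that of
`Ψ` iff the `Aut M`-orbit of `Φ` meets the `i`-face of `Ψ`, i.e. iff the vertices of `T` they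
represent are joined by a walk avoiding colour `i`.
-/

open Pointwise

namespace MulAction

variable {G α : Type*} [Group G] [MulAction G α] {A H : Subgroup G}

theorem smul_orbit_of_le_centralizer (hHA : H ≤ Subgroup.centralizer A) {g : G} (hg : g ∈ A)
    (x : α) : g • orbit H x = orbit H (g • x) := by
  ext y
  simp only [Set.mem_smul_set, mem_orbit_iff, Subgroup.smul_def, exists_exists_eq_and]
  refine exists_congr fun h => ?_
  rw [smul_smul, smul_smul, Subgroup.mem_centralizer_iff.mp (hHA h.2) g hg]

theorem exists_smul_orbit_eq_iff (hHA : H ≤ Subgroup.centralizer A) (x y : α) :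
    (∃ g ∈ A, g • orbit H x = orbit H y) ↔ ∃ h ∈ H, h • y ∈ orbit A x := by
  calc (∃ g ∈ A, g • orbit H x = orbit H y) ↔ ∃ g ∈ A, ∃ h ∈ H, h • y = g • x := by
        refine exists_congr fun g => and_congr_right fun hg => ?_
        rw [smul_orbit_of_le_centralizer hHA hg, orbit_eq_iff, mem_orbit_iff, Subtype.exists]
        simp only [Subgroup.mk_smul, exists_prop]
    _ ↔ ∃ h ∈ H, h • y ∈ orbit A x := by
        simp only [mem_orbit_iff, Subtype.exists, Subgroup.mk_smul, exists_prop]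
        exact ⟨fun ⟨g, hg, h, hh, hgh⟩ => ⟨h, hh, g, hg, hgh.symm⟩,
          fun ⟨h, hh, g, hg, hgh⟩ => ⟨g, hg, h, hh, hgh.symm⟩⟩

end MulAction

theorem Maniplex.closure_le_centralizer_aut {n : ℕ} {F : Type} (M : Maniplex n F)
    (s : Set (Fin n)) :
    Subgroup.closure (M.r '' s) ≤ Subgroup.centralizer M.Aut :=
  (Subgroup.closure_mono (Set.image_subset_range _ _)).trans
    (Subgroup.closure_le_centralizer_centralizer _)

/-- A maniplex `M` is `i`-face-transitive if and only if the subgraph `T^i` of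
its symmetry type graph obtained by deleting all edges and semi-edges of colour
`i` is connected. -/
theorem stmt4 (n : ℕ) (F : Type) (M : Maniplex n F) (i : Fin n) :
    M.faceTransitive i ↔ M.delConn i := by
  rw [Maniplex.faceTransitive, Maniplex.delConn, forall_comm]
  exact forall₂_congr fun Ψ Φ =>
    MulAction.exists_smul_orbit_eq_iff (M.closure_le_centralizer_aut _) Φ Ψ
end

section
/- Let M be a 4-orbit maniplex of rank n-1. Then exactly one of the following holds: (1) M is fully-transitive; (2) there exists i such that M is j-face-transitive for all j ≠ i; (3) there exist distinct i, k such that M is j-face-transitive for all j ∉ {i,k}; (4) there exists i such that M is j-face-transitive for all j ∉ {i-1, i, i+1}. In particular, a 4-orbit maniplex fails to be face-transitive in at most three ranks, and if in three ranks, they are consecutive. -/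
/-!
Let `D` be the set of colours `i` for which `T^i` is disconnected. For `i ∈ D` the involution
`m i` is not generated by the other colours, so it is nontrivial and differs from every other
`m t`. If a vertex is moved by both `m p` and `m q` with `p + 2 ≤ q`, the 4-cycle condition makes
`⟨m p, m q⟩` transitive on the four vertices, so `D ⊆ {p, q}`. Hence for `i, j ∈ D` with
`i + 2 ≤ j` and a third colour `t ∈ D`, `m i` and `m j` have disjoint supports, which on four
points leaves room for only one nontrivial permutation disjoint from each of them. So `m t` meets
both supports, and the same argument forces `t` to be adjacent to `i` and to `j`:
`t = i + 1` and `j = i + 2`.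
-/

open Equiv Finset

namespace Equiv.Perm

variable {α : Type} [Fintype α]

theorem eq_of_support_eq_of_card_support_eq_two [DecidableEq α] {τ ρ : Perm α}
    (h : τ.support = ρ.support) (h2 : #τ.support = 2) : τ = ρ := by
  obtain ⟨a, b, hab, hs⟩ := card_eq_two.1 h2
  refine support_congr h.le fun x hx => ?_
  have hτx : τ x ∈ τ.support := apply_mem_support.2 (h ▸ hx)
  have hρx : ρ x ∈ ρ.support := apply_mem_support.2 hx
  have hτ : τ x ≠ x := mem_support.1 (h ▸ hx)
  have hρ : ρ x ≠ x := mem_support.1 hx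
  rw [← h, hs] at hx hρx
  rw [hs] at hτx
  simp only [mem_insert, mem_singleton] at hx hτx hρx
  grind

theorem support_eq_compl_of_disjoint (hα : Fintype.card α ≤ 4) [DecidableEq α]
    {σ τ : Perm α} (hσ : σ ≠ 1) (hτ : τ ≠ 1) (hστ : σ.Disjoint τ) :
    τ.support = σ.supportᶜ ∧ #τ.support = 2 := by
  have hsub : τ.support ⊆ σ.supportᶜ :=
    subset_compl_iff_disjoint_left.2 (disjoint_iff_disjoint_support.1 hστ)
  have hcompl : #σ.supportᶜ ≤ 2 := by
    have := two_le_card_support_of_ne_one hσ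
    rw [card_compl]; omega
  have hτ2 := two_le_card_support_of_ne_one hτ
  have heq := eq_of_subset_of_card_le hsub (by omega)
  exact ⟨heq, le_antisymm (heq ▸ hcompl) hτ2⟩

theorem eq_of_disjoint_of_disjoint (hα : Fintype.card α ≤ 4) {σ τ ρ : Perm α}
    (hσ : σ ≠ 1) (hτ : τ ≠ 1) (hρ : ρ ≠ 1) (hστ : σ.Disjoint τ) (hσρ : σ.Disjoint ρ) :
    τ = ρ := by
  classical
  obtain ⟨hτs, hτ2⟩ := support_eq_compl_of_disjoint hα hσ hτ hστ
  obtain ⟨hρs, -⟩ := support_eq_compl_of_disjoint hα hσ hρ hσρ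
  exact eq_of_support_eq_of_card_support_eq_two (hτs.trans hρs.symm) hτ2

end Equiv.Perm

namespace SymGraph

variable {n : ℕ} {V : Type} (G : SymGraph n V)

theorem delConn_of_mem_closure {i : Fin n}
    (h : G.m i ∈ Subgroup.closure (G.m '' {c | c ≠ i})) : G.delConn i := by
  have hle : Subgroup.closure (Set.range G.m) ≤ Subgroup.closure (G.m '' {c | c ≠ i}) := by
    refine (Subgroup.closure_le _).2 ?_
    rintro _ ⟨c, rfl⟩
    by_cases hc : c = i
    · exact hc ▸ h
    · exact Subgroup.subset_closure ⟨c, hc, rfl⟩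
  intro u v
  obtain ⟨g, hg, hgu⟩ := G.conn u v
  exact ⟨g, hle hg, hgu⟩

theorem m_ne_one_of_not_delConn {i : Fin n} (hi : ¬ G.delConn i) : G.m i ≠ 1 :=
  fun h => hi (G.delConn_of_mem_closure (h ▸ one_mem _))

theorem m_ne_of_not_delConn {i t : Fin n} (hi : ¬ G.delConn i) (hti : t ≠ i) :
    G.m t ≠ G.m i :=
  fun h => hi (G.delConn_of_mem_closure (h ▸ Subgroup.subset_closure ⟨t, hti, rfl⟩))

theorem delConn_of_orbit_eq_univ {r : Fin n} {H : Subgroup (Perm V)}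
    (hH : H ≤ Subgroup.closure (G.m '' {c | c ≠ r})) {v : V}
    (hv : MulAction.orbit H v = Set.univ) : G.delConn r := by
  intro u w
  obtain ⟨g₁, hg₁⟩ : u ∈ MulAction.orbit H v := hv ▸ Set.mem_univ u
  obtain ⟨g₂, hg₂⟩ : w ∈ MulAction.orbit H v := hv ▸ Set.mem_univ w
  refine ⟨g₂ * g₁⁻¹, hH (mul_mem g₂.2 (inv_mem g₁.2)), ?_⟩
  rw [← hg₁, ← hg₂]
  simp [Subgroup.smul_def]

theorem delConn_of_apply_ne [Fintype V] (hV : Fintype.card V ≤ 4) {p q r : Fin n}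
    (hpq : (p : ℕ) + 2 ≤ q) (hrp : r ≠ p) (hrq : r ≠ q) {v : V}
    (hp : G.m p v ≠ v) (hq : G.m q v ≠ v) : G.delConn r := by
  set H := Subgroup.closure ({G.m p, G.m q} : Set (Perm V))
  have hv : MulAction.orbit H v = Set.univ := by
    refine Set.eq_of_subset_of_ncard_le (Set.subset_univ _) ?_
    rw [G.quot4 p q hpq v hp hq, Set.ncard_univ, Nat.card_eq_fintype_card]
    exact hV
  refine G.delConn_of_orbit_eq_univ ((Subgroup.closure_le _).2 ?_) hv
  rintro _ (rfl | rfl)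
  · exact Subgroup.subset_closure ⟨p, hrp.symm, rfl⟩
  · exact Subgroup.subset_closure ⟨q, hrq.symm, rfl⟩

theorem disjoint_of_not_delConn [Fintype V] (hV : Fintype.card V ≤ 4) {i j t : Fin n}
    (hij : (i : ℕ) + 2 ≤ j ∨ (j : ℕ) + 2 ≤ i) (ht : ¬ G.delConn t) (hti : t ≠ i)
    (htj : t ≠ j) : (G.m i).Disjoint (G.m j) := by
  by_contra h
  simp only [Perm.Disjoint, not_forall, not_or] at h
  obtain ⟨v, hi, hj⟩ := h
  rcases hij with hij | hji
  · exact ht (G.delConn_of_apply_ne hV hij hti htj hi hj)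
  · exact ht (G.delConn_of_apply_ne hV hji htj hti hj hi)

theorem eq_add_one_of_not_delConn [Fintype V] (hV : Fintype.card V ≤ 4) {i j t : Fin n}
    (hi : ¬ G.delConn i) (hj : ¬ G.delConn j) (ht : ¬ G.delConn t)
    (hij : (i : ℕ) + 2 ≤ j) (hti : t ≠ i) (htj : t ≠ j) :
    (t : ℕ) = i + 1 ∧ (j : ℕ) = i + 2 := by
  have hji : j ≠ i := Fin.ne_of_val_ne (by omega)
  have hij_disj := G.disjoint_of_not_delConn hV (.inl hij) ht hti htj
  have hit : ¬ (G.m i).Disjoint (G.m t) := fun h =>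
    G.m_ne_of_not_delConn hj htj (Perm.eq_of_disjoint_of_disjoint hV
      (G.m_ne_one_of_not_delConn hi) (G.m_ne_one_of_not_delConn hj)
      (G.m_ne_one_of_not_delConn ht) hij_disj h).symm
  have hjt : ¬ (G.m j).Disjoint (G.m t) := fun h =>
    G.m_ne_of_not_delConn hi hti (Perm.eq_of_disjoint_of_disjoint hV
      (G.m_ne_one_of_not_delConn hj) (G.m_ne_one_of_not_delConn hi)
      (G.m_ne_one_of_not_delConn ht) hij_disj.symm h).symm
  have hit_near : ¬ ((i : ℕ) + 2 ≤ t ∨ (t : ℕ) + 2 ≤ i) := fun h =>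
    hit (G.disjoint_of_not_delConn hV h hj hji htj.symm)
  have hjt_near : ¬ ((j : ℕ) + 2 ≤ t ∨ (t : ℕ) + 2 ≤ j) := fun h =>
    hjt (G.disjoint_of_not_delConn hV h hi hji.symm hti.symm)
  have := Fin.val_ne_of_ne hti
  have := Fin.val_ne_of_ne htj
  omega

end SymGraph

theorem Set.exists_eq_three_consecutive {n : ℕ} {D : Set (Fin n)}
    (hD : ∀ i ∈ D, ∀ j ∈ D, ∀ t ∈ D, (i : ℕ) + 2 ≤ j → t ≠ i → t ≠ j →
      (t : ℕ) = i + 1 ∧ (j : ℕ) = i + 2)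
    {i j t : Fin n} (hi : i ∈ D) (hj : j ∈ D) (ht : t ∈ D)
    (hij : (i : ℕ) + 2 ≤ j) (hti : t ≠ i) (htj : t ≠ j) :
    ∃ k : ℕ, k + 2 < n ∧ D = {c : Fin n | (c : ℕ) = k ∨ (c : ℕ) = k + 1 ∨ (c : ℕ) = k + 2} := by
  obtain ⟨ht_eq, hj_eq⟩ := hD i hi j hj t ht hij hti htj
  refine ⟨i, by omega, Set.ext fun x => ⟨fun hx => ?_, ?_⟩⟩
  · by_cases hxi : x = i
    · exact .inl (congrArg Fin.val hxi)
    by_cases hxj : x = j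
    · exact .inr (.inr (hxj ▸ hj_eq))
    exact .inr (.inl (hD i hi j hj x hx hij hxi hxj).1)
  · rintro (hx | hx | hx)
    · rwa [Fin.ext (hx : (x : ℕ) = i)]
    · rwa [Fin.ext (hx.trans ht_eq.symm)]
    · rwa [Fin.ext (hx.trans hj_eq.symm)]

theorem Set.eq_empty_or_singleton_or_pair_or_three_consecutive {n : ℕ} (D : Set (Fin n))
    (hD : ∀ i ∈ D, ∀ j ∈ D, ∀ t ∈ D, (i : ℕ) + 2 ≤ j → t ≠ i → t ≠ j →
      (t : ℕ) = i + 1 ∧ (j : ℕ) = i + 2) :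
    D = ∅ ∨ (∃ i, D = {i}) ∨ (∃ i k, i ≠ k ∧ D = {i, k}) ∨
      ∃ k : ℕ, k + 2 < n ∧ D = {c : Fin n | (c : ℕ) = k ∨ (c : ℕ) = k + 1 ∨ (c : ℕ) = k + 2} := by
  rcases Nat.lt_or_ge D.ncard 3 with hD3 | hD3
  · interval_cases hc : D.ncard
    · exact .inl ((Set.ncard_eq_zero D.toFinite).1 hc)
    · exact .inr (.inl (Set.ncard_eq_one.1 hc))
    · exact .inr (.inr (.inl (Set.ncard_eq_two.1 hc)))
  obtain ⟨a, b, c, ha, hb, hc, hab, hac, hbc⟩ := (Set.two_lt_ncard_iff D.toFinite).1 hD3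
  have := Fin.val_ne_of_ne hab
  have := Fin.val_ne_of_ne hac
  have := Fin.val_ne_of_ne hbc
  refine .inr (.inr (.inr ?_))
  rcases (by omega : (a : ℕ) + 2 ≤ b ∨ (b : ℕ) + 2 ≤ a ∨ (a : ℕ) + 2 ≤ c ∨
      (c : ℕ) + 2 ≤ a ∨ (b : ℕ) + 2 ≤ c ∨ (c : ℕ) + 2 ≤ b) with h | h | h | h | h | h
  · exact Set.exists_eq_three_consecutive hD ha hb hc h hac.symm hbc.symm
  · exact Set.exists_eq_three_consecutive hD hb ha hc h hbc.symm hac.symm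
  · exact Set.exists_eq_three_consecutive hD ha hc hb h hab.symm hbc
  · exact Set.exists_eq_three_consecutive hD hc ha hb h hbc hab.symm
  · exact Set.exists_eq_three_consecutive hD hb hc ha h hab hac
  · exact Set.exists_eq_three_consecutive hD hc hb ha h hac hab

/-- Classification of the failure of face-transitivity for a 4-orbit maniplex:
the set `D` of ranks `i` for which `T^i` is disconnected (i.e. `M` is not
`i`-face-transitive) is empty, a singleton, a pair, or a set of three
consecutive colours `{j, j+1, j+2}`. -/
theorem stmt8 (n : ℕ) (V : Type) [Fintype V] (h4 : Fintype.card V = 4)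
    (G : SymGraph n V) :
    {i : Fin n | ¬ G.delConn i} = (∅ : Set (Fin n)) ∨
    (∃ i : Fin n, {i : Fin n | ¬ G.delConn i} = {i}) ∨
    (∃ i k : Fin n, i ≠ k ∧ {i : Fin n | ¬ G.delConn i} = {i, k}) ∨
    (∃ j : ℕ, j + 2 < n ∧
      {i : Fin n | ¬ G.delConn i} =
        {c : Fin n | (c : ℕ) = j ∨ (c : ℕ) = j + 1 ∨ (c : ℕ) = j + 2}) :=
  Set.eq_empty_or_singleton_or_pair_or_three_consecutive _ fun _ hi _ hj _ ht hij hti htj =>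
    G.eq_add_one_of_not_delConn h4.le hi hj ht hij hti htj
end

section
/- An oriented maniplex M is chiral-a-la-Conway (i.e., Aut^+(M) = Aut(M), every automorphism preserves the orientation) if and only if its symmetry type graph T(M) contains no closed walk of odd length (counting semi-edges as contributing length one); equivalently, T(M) is 'bipartite' in the pregraph sense of having no odd closed walks. -/

lemma aux_rev {n : ℕ} {F : Type} (M : Maniplex n F) :
    ∀ l : List (Fin n), (l.reverse.map M.r).prod * (l.map M.r).prod = 1 := by
  intro l
  induction l with
  | nil => simp
  | cons a l ih =>
      simp only [List.reverse_cons, List.map_append, List.map_cons, List.map_nil,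
        List.prod_append, List.prod_cons, List.prod_nil, mul_one]
      rw [mul_assoc, ← mul_assoc (M.r a), M.invol a, one_mul, ih]

lemma aux_list {n : ℕ} {F : Type} (M : Maniplex n F) :
    ∀ g ∈ Subgroup.closure (Set.range M.r),
      ∃ l : List (Fin n), (l.map M.r).prod = g := by
  intro g hg
  induction hg using Subgroup.closure_induction with
  | mem x hx => obtain ⟨c, rfl⟩ := hx; exact ⟨[c], by simp⟩
  | one => exact ⟨[], by simp⟩
  | mul x y hx hy ihx ihy =>
      obtain ⟨l1, rfl⟩ := ihx; obtain ⟨l2, rfl⟩ := ihy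
      exact ⟨l1 ++ l2, by simp⟩
  | inv x hx ih =>
      obtain ⟨l, rfl⟩ := ih
      exact ⟨l.reverse, (inv_eq_of_mul_eq_one_left (aux_rev M l)).symm⟩

lemma aux_par {n : ℕ} {F : Type} (M : Maniplex n F) (χ : F → Bool)
    (hχ : ∀ (c : Fin n) (v : F), χ ((M.r c) v) = !(χ v)) :
    ∀ (l : List (Fin n)) (v : F),
      χ (((l.map M.r).prod : Equiv.Perm F) v)
        = if Even l.length then χ v else !(χ v) := by
  intro l
  induction l with
  | nil => simp
  | cons a l ih =>
      intro v
      simp only [List.map_cons, List.prod_cons, Equiv.Perm.mul_apply, hχ, ih,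
        List.length_cons, Nat.even_add_one]
      rcases Nat.even_or_odd l.length with h | h
      · simp [h]
      · simp [Nat.not_even_iff_odd.mpr h, h]

/-- An oriented maniplex (with orientation the proper 2-colouring `χ` of its
bipartite flag graph) is chiral-a-la-Conway (every automorphism preserves the
orientation, i.e. `Aut⁺ M = Aut M`) if and only if its symmetry type graph has
no closed walk of odd length: there is no flag `Φ` and odd word `l` in the
connection generators taking `Φ` back into its own `Aut M`-orbit. -/
theorem stmt14 (n : ℕ) (F : Type) (M : Maniplex n F) (χ : F → Bool)
    (hχ : ∀ (c : Fin n) (v : F), χ ((M.r c) v) = !(χ v)) :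
    (∀ g ∈ M.Aut, ∀ v : F, χ ((g : Equiv.Perm F) v) = χ v) ↔
      ¬ ∃ (Φ : F) (l : List (Fin n)), Odd l.length ∧
          ((l.map M.r).prod : Equiv.Perm F) Φ ∈ MulAction.orbit M.Aut Φ := by

  constructor
  · rintro h ⟨Φ, l, hodd, g, hg⟩
    have h1 := aux_par M χ hχ l Φ
    rw [Nat.not_even_iff_odd.mpr hodd |> if_neg] at h1
    have hg' : (g : Equiv.Perm F) Φ = ((l.map M.r).prod : Equiv.Perm F) Φ := hg
    have h2 := h g g.2 Φ
    rw [hg'] at h2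
    rw [h2] at h1
    exact (Bool.not_ne_self _).symm h1
  · intro h g hg v
    obtain ⟨p, hp, hpv⟩ := M.conn v ((g : Equiv.Perm F) v)
    obtain ⟨l, rfl⟩ := aux_list M p hp
    rcases Nat.even_or_odd l.length with he | ho
    · have := aux_par M χ hχ l v
      rw [if_pos he, hpv] at this
      exact this.symm ▸ rfl
    · exact absurd ⟨v, l, ho, ⟨⟨g, hg⟩, hpv.symm⟩⟩ h
end
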